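/- arXiv:2202.13328 — 3 statements merged into one kernel-verified Lean document; each statement's English description precedes it below -/
import Mathlib

section
/- With the setup of empirical and population gradient descent as above, the one-step expansion holds pointwise: ‖w^S_{t+1} − w^D_{t+1}‖² ≤ ‖w^S_t − w^D_t‖² + 2η(∇F_D(w^D_t) − ∇F_S(w^D_t))·(w^S_t − w^D_t) + 4η²L². -/
/-!
Write the step difference as `(wS - wD) - η (∇F_S wS - ∇F_D wD)` and expand the square. In the
cross term, `∇F_S wS - ∇F_D wD = (∇F_S wS - ∇F_S wD) - (∇F_D wD - ∇F_S wD)`; the first part pairs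
nonnegatively with `wS - wD` by monotonicity of the gradient of the convex `F_S`, which leaves the
stated inner product. The quadratic term is at most `η² (2L)²` since an `L`-Lipschitz function has
gradients of norm at most `L`.
-/

open scoped RealInnerProductSpace NNReal

section FirstOrder

variable {E : Type*} [NormedAddCommGroup E] [NormedSpace ℝ E]

lemma ConvexOn.add_fderiv_sub_le {s : Set E} {f : E → ℝ} {f' : E →L[ℝ] ℝ} {x y : E}
    (hf : ConvexOn ℝ s f) (hx : x ∈ s) (hy : y ∈ s) (hf' : HasFDerivAt f f' x) :
    f x + f' (y - x) ≤ f y := by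
  set l : ℝ →ᵃ[ℝ] E := AffineMap.lineMap x y
  have hline : ConvexOn ℝ (l ⁻¹' s) (f ∘ l) := hf.comp_affineMap _
  have hderiv : HasDerivAt (f ∘ l) (f' (y - x)) 0 :=
    hf'.comp_hasDerivAt_of_eq 0 AffineMap.hasDerivAt_lineMap (by simp [l])
  have hslope := hline.le_slope_of_hasDerivAt (by simpa [l] using hx) (by simpa [l] using hy)
    zero_lt_one hderiv
  simp only [slope, l, Function.comp_apply, AffineMap.lineMap_apply_zero,
    AffineMap.lineMap_apply_one, sub_zero, inv_one, one_smul, vsub_eq_sub] at hslope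
  linarith

end FirstOrder

section Gradient

variable {E : Type*} [NormedAddCommGroup E] [InnerProductSpace ℝ E] [CompleteSpace E]

lemma ConvexOn.inner_gradient_sub_gradient_nonneg {s : Set E} {f : E → ℝ} {x y : E}
    (hf : ConvexOn ℝ s f) (hx : x ∈ s) (hy : y ∈ s)
    (hfx : DifferentiableAt ℝ f x) (hfy : DifferentiableAt ℝ f y) :
    0 ≤ ⟪gradient f x - gradient f y, x - y⟫ := by
  have hxy := hf.add_fderiv_sub_le hx hy hfx.hasFDerivAt
  have hyx := hf.add_fderiv_sub_le hy hx hfy.hasFDerivAt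
  rw [← neg_sub x y, map_neg] at hxy
  rw [inner_sub_left, inner_gradient_left, inner_gradient_left]
  linarith

lemma norm_gradient_le_of_lipschitzWith {f : E → ℝ} {K : ℝ≥0} (hf : LipschitzWith K f) (x : E) :
    ‖gradient f x‖ ≤ K :=
  ((InnerProductSpace.toDual ℝ E).symm.norm_map (fderiv ℝ f x)).trans_le
    (norm_fderiv_le_of_lipschitz ℝ hf)

end Gradient

lemma norm_sub_smul_sub_sub_smul_sq {E : Type*} [NormedAddCommGroup E] [InnerProductSpace ℝ E]
    (x y u v : E) (η : ℝ) :
    ‖(x - η • u) - (y - η • v)‖ ^ 2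
      = ‖x - y‖ ^ 2 - 2 * η * ⟪u - v, x - y⟫ + η ^ 2 * ‖u - v‖ ^ 2 := by
  rw [show (x - η • u) - (y - η • v) = (x - y) - η • (u - v) by module, norm_sub_sq_real,
    real_inner_smul_right, real_inner_comm, norm_smul, mul_pow, Real.norm_eq_abs, sq_abs]
  ring

theorem stmt_7_general (d : ℕ) (FS FD : EuclideanSpace ℝ (Fin d) → ℝ) (η L : ℝ)
    (hη : 0 ≤ η) (hL : 0 ≤ L)
    (hconvS : ConvexOn ℝ Set.univ FS)
    (hdiffS : Differentiable ℝ FS)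
    (hlipS : LipschitzWith L.toNNReal FS) (hlipD : LipschitzWith L.toNNReal FD)
    (wS wD : EuclideanSpace ℝ (Fin d)) :
    ‖(wS - η • gradient FS wS) - (wD - η • gradient FD wD)‖ ^ 2
      ≤ ‖wS - wD‖ ^ 2
        + 2 * η * ⟪gradient FD wD - gradient FS wD, wS - wD⟫
        + 4 * η ^ 2 * L ^ 2 := by
  have hmono : 0 ≤ ⟪gradient FS wS - gradient FS wD, wS - wD⟫ :=
    hconvS.inner_gradient_sub_gradient_nonneg trivial trivial (hdiffS wS) (hdiffS wD)
  have hsplit : ⟪gradient FS wS - gradient FD wD, wS - wD⟫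
      = ⟪gradient FS wS - gradient FS wD, wS - wD⟫
        - ⟪gradient FD wD - gradient FS wD, wS - wD⟫ := by
    rw [← inner_sub_left, sub_sub_sub_cancel_right]
  have hgrad : ‖gradient FS wS - gradient FD wD‖ ≤ 2 * L := by
    have hS := norm_gradient_le_of_lipschitzWith hlipS wS
    have hD := norm_gradient_le_of_lipschitzWith hlipD wD
    rw [Real.coe_toNNReal L hL] at hS hD
    linarith [norm_sub_le (gradient FS wS) (gradient FD wD)]
  have hsq := pow_le_pow_left₀ (norm_nonneg _) hgrad 2
  rw [norm_sub_smul_sub_sub_smul_sq, hsplit]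
  linarith [mul_nonneg hη hmono, mul_le_mul_of_nonneg_left hsq (sq_nonneg η)]

theorem stmt_7 (d : ℕ) (FS FD : EuclideanSpace ℝ (Fin d) → ℝ) (η L : ℝ)
    (hη : 0 ≤ η) (hL : 0 ≤ L)
    (hconvS : ConvexOn ℝ Set.univ FS) (hconvD : ConvexOn ℝ Set.univ FD)
    (hdiffS : Differentiable ℝ FS) (hdiffD : Differentiable ℝ FD)
    (hlipS : LipschitzWith L.toNNReal FS) (hlipD : LipschitzWith L.toNNReal FD)
    (wS wD : EuclideanSpace ℝ (Fin d)) :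
    ‖(wS - η • gradient FS wS) - (wD - η • gradient FD wD)‖ ^ 2
      ≤ ‖wS - wD‖ ^ 2
        + 2 * η * ⟪gradient FD wD - gradient FS wD, wS - wD⟫
        + 4 * η ^ 2 * L ^ 2 :=
  stmt_7_general d FS FD η L hη hL hconvS hdiffS hlipS hlipD wS wD
end

section
/- Let ρ_i : ℝ → ℝ be L-Lipschitz functions for i = 1,…,n, let A ⊆ ℝ^n, and let σ_1,…,σ_n be i.i.d. Rademacher variables. Then E_σ[sup_{a∈A} Σ_i σ_i ρ_i(a_i)] ≤ L · E_σ[sup_{a∈A} Σ_i σ_i a_i]. -/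
private def sg (b : Bool) : ℝ := if b then 1 else -1

private lemma abs_sg (b : Bool) : |sg b| = 1 := by cases b <;> simp [sg]

private lemma sg_not (b : Bool) : sg (!b) = - sg b := by cases b <;> simp [sg]

private lemma my_csSup_le_add {α : Type*} {A : Set α} (hA : A.Nonempty) (f g : α → ℝ) (M : ℝ)
    (h : ∀ a ∈ A, ∀ b ∈ A, f a + g b ≤ M) :
    sSup (f '' A) + sSup (g '' A) ≤ M := by
  have h1 : sSup (f '' A) ≤ M - sSup (g '' A) := by
    apply csSup_le (hA.image f)
    rintro x ⟨a, ha, rfl⟩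
    have h2 : sSup (g '' A) ≤ M - f a := by
      apply csSup_le (hA.image g)
      rintro y ⟨b, hb, rfl⟩
      linarith [h a ha b hb]
    linarith
  linarith

private lemma swap_lemma (n : ℕ) (A : Set (Fin n → ℝ)) (hA : A.Nonempty) (j : Fin n)
    (h₁ h₂ : Fin n → ℝ → ℝ)
    (heq : ∀ i, i ≠ j → h₁ i = h₂ i)
    (hj : ∀ x y, h₁ j x - h₁ j y ≤ |h₂ j x - h₂ j y|)
    (D : ℝ) (hD : ∀ a ∈ A, ∀ i, |h₁ i (a i)| ≤ D ∧ |h₂ i (a i)| ≤ D) :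
    ∑ ε : Fin n → Bool, sSup ((fun a => ∑ i, sg (ε i) * h₁ i (a i)) '' A)
      ≤ ∑ ε : Fin n → Bool, sSup ((fun a => ∑ i, sg (ε i) * h₂ i (a i)) '' A) := by
  obtain ⟨a₀, ha₀⟩ := hA
  have hD0 : 0 ≤ D := (abs_nonneg _).trans (hD a₀ ha₀ j).1
  -- the flip involution
  have hinv : Function.Involutive (fun ε : Fin n → Bool => Function.update ε j (!ε j)) := by
    intro ε
    funext i
    by_cases hi : i = j
    · subst hi; simp
    · simp [Function.update_of_ne hi]
  set e : Equiv.Perm (Fin n → Bool) := hinv.toPerm _ with he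
  set F₁ : (Fin n → Bool) → ℝ := fun ε => sSup ((fun a => ∑ i, sg (ε i) * h₁ i (a i)) '' A)
    with hF₁
  set F₂ : (Fin n → Bool) → ℝ := fun ε => sSup ((fun a => ∑ i, sg (ε i) * h₂ i (a i)) '' A)
    with hF₂
  have key : ∀ ε, F₁ ε + F₁ (e ε) ≤ F₂ ε + F₂ (e ε) := by
    intro ε
    set s : ℝ := sg (ε j) with hs
    set R : (Fin n → ℝ) → ℝ := fun a => ∑ i ∈ Finset.univ.erase j, sg (ε i) * h₁ i (a i)
      with hR
    have hRabs : ∀ a ∈ A, |R a| ≤ n * D := by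
      intro a ha
      calc |R a| ≤ ∑ i ∈ Finset.univ.erase j, |sg (ε i) * h₁ i (a i)| :=
            Finset.abs_sum_le_sum_abs _ _
        _ ≤ ∑ _i ∈ Finset.univ.erase j, D := by
            refine Finset.sum_le_sum fun i _ => ?_
            rw [abs_mul, abs_sg, one_mul]
            exact (hD a ha i).1
        _ = ((Finset.univ.erase j).card : ℝ) * D := by
            rw [Finset.sum_const, nsmul_eq_mul]
        _ ≤ n * D := by
            have : (Finset.univ.erase j).card ≤ n := by
              simpa using (Finset.card_erase_le.trans (by simp))
            exact mul_le_mul_of_nonneg_right (by exact_mod_cast this) hD0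
    -- rewriting lemmas
    have ej : e ε j = !ε j := by simp [he, Function.Involutive.toPerm]
    have ei : ∀ i, i ≠ j → e ε i = ε i := by
      intro i hi; simp [he, Function.Involutive.toPerm, Function.update_of_ne hi]
    have dec : ∀ (h : Fin n → ℝ → ℝ) (δ : Fin n → Bool) (a : Fin n → ℝ),
        (∑ i, sg (δ i) * h i (a i)) =
          sg (δ j) * h j (a j) + ∑ i ∈ Finset.univ.erase j, sg (δ i) * h i (a i) :=
      fun h δ a => (Finset.add_sum_erase _ _ (Finset.mem_univ j)).symm
    have Req₁ : ∀ a : Fin n → ℝ, (∑ i ∈ Finset.univ.erase j, sg (e ε i) * h₁ i (a i)) = R a := by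
      intro a
      refine Finset.sum_congr rfl fun i hi => ?_
      rw [ei i (Finset.ne_of_mem_erase hi)]
    have Req₂ : ∀ (δ : Fin n → Bool), (∀ i, i ≠ j → δ i = ε i) →
        ∀ a : Fin n → ℝ, (∑ i ∈ Finset.univ.erase j, sg (δ i) * h₂ i (a i)) = R a := by
      intro δ hδ a
      refine Finset.sum_congr rfl fun i hi => ?_
      have hne := Finset.ne_of_mem_erase hi
      rw [hδ i hne, ← heq i hne]
    have E1 : (fun a => ∑ i, sg (ε i) * h₁ i (a i)) = fun a => s * h₁ j (a j) + R a := by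
      funext a; rw [dec h₁ ε a]
    have E2 : (fun a => ∑ i, sg (e ε i) * h₁ i (a i)) = fun a => -s * h₁ j (a j) + R a := by
      funext a; rw [dec h₁ (e ε) a, ej, sg_not, Req₁ a]
    have E3 : (fun a => ∑ i, sg (ε i) * h₂ i (a i)) = fun a => s * h₂ j (a j) + R a := by
      funext a; rw [dec h₂ ε a, Req₂ ε (fun _ _ => rfl) a]
    have E4 : (fun a => ∑ i, sg (e ε i) * h₂ i (a i)) = fun a => -s * h₂ j (a j) + R a := by
      funext a; rw [dec h₂ (e ε) a, ej, sg_not, Req₂ (e ε) ei a]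
    have habs_s : |s| = 1 := abs_sg _
    have bdd : ∀ (c : ℝ), |c| = 1 →
        BddAbove ((fun a => c * h₂ j (a j) + R a) '' A) := by
      intro c hc
      refine ⟨D + n * D, ?_⟩
      rintro x ⟨a, ha, rfl⟩
      have h1 : c * h₂ j (a j) ≤ D := by
        calc c * h₂ j (a j) ≤ |c * h₂ j (a j)| := le_abs_self _
          _ = |h₂ j (a j)| := by rw [abs_mul, hc, one_mul]
          _ ≤ D := (hD a ha j).2
      have h2 := (abs_le.mp (hRabs a ha)).2
      simpa using add_le_add h1 h2
    have bddp := bdd s habs_s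
    have bddm := bdd (-s) (by rw [abs_neg, habs_s])
    simp only [hF₁, hF₂, E1, E2, E3, E4]
    apply my_csSup_le_add ⟨a₀, ha₀⟩
    intro a ha b hb
    have hstep : s * h₁ j (a j) - s * h₁ j (b j) ≤ |h₂ j (a j) - h₂ j (b j)| := by
      have hs1 : s = 1 ∨ s = -1 := by cases h : ε j <;> simp [hs, sg, h]
      rcases hs1 with h | h
      · rw [h]; simpa using hj (a j) (b j)
      · rw [h]
        have := hj (b j) (a j)
        rw [abs_sub_comm] at this
        nlinarith [this]
    rcases le_total (s * h₂ j (a j)) (s * h₂ j (b j)) with hc | hc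
    · have habs : |h₂ j (a j) - h₂ j (b j)| = s * h₂ j (b j) - s * h₂ j (a j) := by
        have : |h₂ j (a j) - h₂ j (b j)| = |s * h₂ j (a j) - s * h₂ j (b j)| := by
          rw [← mul_sub, abs_mul, habs_s, one_mul]
        rw [this, abs_sub_comm, abs_of_nonneg (by linarith)]
      have l1 : s * h₂ j (b j) + R b ≤ sSup ((fun a => s * h₂ j (a j) + R a) '' A) :=
        le_csSup bddp ⟨b, hb, rfl⟩
      have l2 : -s * h₂ j (a j) + R a ≤ sSup ((fun a => -s * h₂ j (a j) + R a) '' A) :=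
        le_csSup bddm ⟨a, ha, rfl⟩
      nlinarith [hstep, habs, l1, l2]
    · have habs : |h₂ j (a j) - h₂ j (b j)| = s * h₂ j (a j) - s * h₂ j (b j) := by
        have : |h₂ j (a j) - h₂ j (b j)| = |s * h₂ j (a j) - s * h₂ j (b j)| := by
          rw [← mul_sub, abs_mul, habs_s, one_mul]
        rw [this, abs_of_nonneg (by linarith)]
      have l1 : s * h₂ j (a j) + R a ≤ sSup ((fun a => s * h₂ j (a j) + R a) '' A) :=
        le_csSup bddp ⟨a, ha, rfl⟩
      have l2 : -s * h₂ j (b j) + R b ≤ sSup ((fun a => -s * h₂ j (a j) + R a) '' A) :=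
        le_csSup bddm ⟨b, hb, rfl⟩
      nlinarith [hstep, habs, l1, l2]
  have sumflip : ∀ (F : (Fin n → Bool) → ℝ), (∑ ε, F (e ε)) = ∑ ε, F ε :=
    fun F => Equiv.sum_comp e F
  have twoLHS : (2:ℝ) * ∑ ε, F₁ ε = ∑ ε, (F₁ ε + F₁ (e ε)) := by
    rw [Finset.sum_add_distrib, sumflip]; ring
  have twoRHS : (2:ℝ) * ∑ ε, F₂ ε = ∑ ε, (F₂ ε + F₂ (e ε)) := by
    rw [Finset.sum_add_distrib, sumflip]; ring
  have hsum : ∑ ε, (F₁ ε + F₁ (e ε)) ≤ ∑ ε, (F₂ ε + F₂ (e ε)) :=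
    Finset.sum_le_sum (fun ε _ => key ε)
  show ∑ ε, F₁ ε ≤ ∑ ε, F₂ ε
  linarith [twoLHS, twoRHS, hsum]


private lemma sSup_image_mul {L : ℝ} (hL : 0 ≤ L) {s : Set ℝ} (hs : s.Nonempty)
    (hb : BddAbove s) : sSup ((fun x => L * x) '' s) = L * sSup s := by
  rcases hL.eq_or_lt with h | h
  · obtain ⟨x, hx⟩ := hs
    rw [← h]
    simp only [zero_mul]
    rw [show (fun _ : ℝ => (0:ℝ)) '' s = {0} from by
      ext y
      constructor
      · rintro ⟨z, _, rfl⟩; rfl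
      · rintro rfl; exact ⟨x, hx, rfl⟩]
    · simp
  · apply le_antisymm
    · apply csSup_le (hs.image _)
      rintro y ⟨x, hx, rfl⟩
      exact mul_le_mul_of_nonneg_left (le_csSup hb hx) hL
    · obtain ⟨B, hB⟩ := hb
      have hbi : BddAbove ((fun x => L * x) '' s) := by
        refine ⟨L * B, ?_⟩
        rintro y ⟨x, hx, rfl⟩
        exact mul_le_mul_of_nonneg_left (hB hx) hL
      rw [mul_comm, ← le_div_iff₀ h]
      apply csSup_le hs
      intro x hx
      rw [le_div_iff₀ h, mul_comm]
      exact le_csSup hbi ⟨x, hx, rfl⟩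


private lemma sg_def (b : Bool) : (if b then (1:ℝ) else -1) = sg b := rfl

theorem stmt_14 (n : ℕ) (L : ℝ) (hL : 0 ≤ L)
    (ρ : Fin n → ℝ → ℝ) (hρ : ∀ i, LipschitzWith L.toNNReal (ρ i))
    (A : Set (Fin n → ℝ)) (hA : A.Nonempty)
    (hbdd : ∃ C, ∀ a ∈ A, ∀ i, |a i| ≤ C) :
    ((2 : ℝ) ^ n)⁻¹ *
        ∑ ε : Fin n → Bool,
          sSup ((fun a => ∑ i, (if ε i then (1 : ℝ) else -1) * ρ i (a i)) '' A)
      ≤ L * (((2 : ℝ) ^ n)⁻¹ *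
          ∑ ε : Fin n → Bool,
            sSup ((fun a => ∑ i, (if ε i then (1 : ℝ) else -1) * a i) '' A)) := by
  classical
  obtain ⟨C0, hC0⟩ := hbdd
  set C : ℝ := max C0 0 with hCdef
  have hC : ∀ a ∈ A, ∀ i, |a i| ≤ C := fun a ha i => (hC0 a ha i).trans (le_max_left _ _)
  have hCnn : (0:ℝ) ≤ C := le_max_right _ _
  set D : ℝ := L * C + ∑ i, |ρ i 0| with hDdef
  have hsum0 : (0:ℝ) ≤ ∑ i, |ρ i 0| := Finset.sum_nonneg fun i _ => abs_nonneg _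
  have hLip : ∀ i x y, |ρ i x - ρ i y| ≤ L * |x - y| := by
    intro i x y
    have h := (hρ i).dist_le_mul x y
    rwa [Real.dist_eq, Real.dist_eq, Real.coe_toNNReal L hL] at h
  have hρ0 : ∀ i x, |x| ≤ C → |ρ i x| ≤ D := by
    intro i x hx
    have t1 := abs_sub_abs_le_abs_sub (ρ i x) (ρ i 0)
    have t2 := hLip i x 0
    rw [sub_zero] at t2
    have t3 : L * |x| ≤ L * C := mul_le_mul_of_nonneg_left hx hL
    have t4 : |ρ i 0| ≤ ∑ i, |ρ i 0| :=
      Finset.single_le_sum (f := fun i => |ρ i 0|) (fun i _ => abs_nonneg _) (Finset.mem_univ i)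
    have t5 : |ρ i x| - |ρ i 0| ≤ L * C := by linarith
    linarith [hDdef]
  have hgD : ∀ (S : Finset (Fin n)), ∀ a ∈ A, ∀ i,
      |(if i ∈ S then (fun x => L * x) else ρ i) (a i)| ≤ D := by
    intro S a ha i
    by_cases hi : i ∈ S
    · simp only [if_pos hi]
      have h1 : |L * a i| = L * |a i| := by rw [abs_mul, abs_of_nonneg hL]
      have h2 : L * |a i| ≤ L * C := mul_le_mul_of_nonneg_left (hC a ha i) hL
      linarith
    · simp only [if_neg hi]
      exact hρ0 i (a i) (hC a ha i)
  have main : ∀ S : Finset (Fin n),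
      (∑ ε : Fin n → Bool, sSup ((fun a => ∑ i, sg (ε i) * ρ i (a i)) '' A))
        ≤ ∑ ε : Fin n → Bool,
            sSup ((fun a => ∑ i, sg (ε i) *
              (if i ∈ S then (fun x => L * x) else ρ i) (a i)) '' A) := by
    intro S
    induction S using Finset.induction_on with
    | empty => simp
    | @insert j S hjS ih =>
      refine ih.trans ?_
      refine swap_lemma n A hA j _ _ ?_ ?_ D ?_
      · intro i hi
        have : i ∈ insert j S ↔ i ∈ S := by
          simp [Finset.mem_insert, hi]
        by_cases h' : i ∈ S
        · rw [if_pos h', if_pos (this.mpr h')]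
        · rw [if_neg h', if_neg (fun hmem => h' (this.mp hmem))]
      · intro x y
        rw [if_neg hjS, if_pos (Finset.mem_insert_self j S)]
        have h1 := hLip j x y
        have h2 : |L * x - L * y| = L * |x - y| := by
          rw [← mul_sub, abs_mul, abs_of_nonneg hL]
        have h3 := le_abs_self (ρ j x - ρ j y)
        linarith
      · intro a ha i
        exact ⟨hgD S a ha i, hgD (insert j S) a ha i⟩
  have huniv := main Finset.univ
  simp only [Finset.mem_univ, if_true] at huniv
  have hbddimg : ∀ ε : Fin n → Bool, BddAbove ((fun a => ∑ i, sg (ε i) * a i) '' A) := by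
    intro ε
    refine ⟨(n : ℝ) * C, ?_⟩
    rintro y ⟨a, ha, rfl⟩
    calc (∑ i, sg (ε i) * a i) ≤ ∑ i, |sg (ε i) * a i| :=
          Finset.sum_le_sum fun i _ => le_abs_self _
      _ ≤ ∑ _i : Fin n, C := Finset.sum_le_sum fun i _ => by
          rw [abs_mul, abs_sg, one_mul]; exact hC a ha i
      _ = (n : ℝ) * C := by rw [Finset.sum_const, nsmul_eq_mul, Finset.card_univ,
            Fintype.card_fin]
  have himg : ∀ ε : Fin n → Bool,
      sSup ((fun a => ∑ i, sg (ε i) * (L * a i)) '' A)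
        = L * sSup ((fun a => ∑ i, sg (ε i) * a i) '' A) := by
    intro ε
    have hcomp : (fun a : Fin n → ℝ => ∑ i, sg (ε i) * (L * a i))
        = (fun x => L * x) ∘ (fun a => ∑ i, sg (ε i) * a i) := by
      funext a
      show (∑ i, sg (ε i) * (L * a i)) = L * ∑ i, sg (ε i) * a i
      rw [Finset.mul_sum]
      exact Finset.sum_congr rfl fun i _ => by ring
    rw [hcomp, Set.image_comp]
    exact sSup_image_mul hL (hA.image _) (hbddimg ε)
  have hsum : (∑ ε : Fin n → Bool, sSup ((fun a => ∑ i, sg (ε i) * (L * a i)) '' A))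
      = L * ∑ ε : Fin n → Bool, sSup ((fun a => ∑ i, sg (ε i) * a i) '' A) := by
    rw [Finset.mul_sum]
    exact Finset.sum_congr rfl fun ε _ => himg ε
  simp only [sg_def]
  have hpos : (0:ℝ) ≤ ((2:ℝ) ^ n)⁻¹ := by positivity
  calc ((2 : ℝ) ^ n)⁻¹ * ∑ ε : Fin n → Bool,
        sSup ((fun a => ∑ i, sg (ε i) * ρ i (a i)) '' A)
      ≤ ((2 : ℝ) ^ n)⁻¹ * ∑ ε : Fin n → Bool,
        sSup ((fun a => ∑ i, sg (ε i) * (L * a i)) '' A) :=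
        mul_le_mul_of_nonneg_left huniv hpos
    _ = ((2 : ℝ) ^ n)⁻¹ * (L * ∑ ε : Fin n → Bool,
        sSup ((fun a => ∑ i, sg (ε i) * a i) '' A)) := by rw [hsum]
    _ = L * (((2 : ℝ) ^ n)⁻¹ * ∑ ε : Fin n → Bool,
        sSup ((fun a => ∑ i, sg (ε i) * a i) '' A)) := by ring
end

section
/- Let z_1,…,z_n, z'_1,…,z'_n be i.i.d. uniform on {−1, +1}. Then with probability at least 1/10, |(1/n)Σ_{i=1}^n (z_i − z'_i)| ≥ 1/√n. -/
/-!
Write `S = ∑ i, (z_i - z'_i)`. Peeling off one step at a time gives the moments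
`E[S²] = 2n` and `E[S⁴] = 12n² - 4n`. The Paley–Zygmund form of Cauchy–Schwarz, applied to
the positive part of `S² - n`, then gives
`P(S² ≥ n) ≥ E[S² - n]² / E[(S² - n)²] = n² / (9n² - 4n) ≥ 1/9`,
and `S² ≥ n` is exactly the event `|S / n| ≥ 1 / √n`.
-/

open Finset

theorem sum_sum_add_pow {α γ R : Type*} [CommSemiring R] (s : Finset α) (t : Finset γ)
    (u : α → R) (v : γ → R) (k : ℕ) :
    ∑ a ∈ s, ∑ c ∈ t, (u a + v c) ^ k =
      ∑ j ∈ range (k + 1),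
        (∑ a ∈ s, u a ^ j) * (∑ c ∈ t, v c ^ (k - j)) * k.choose j := by
  simp_rw [add_pow, sum_mul_sum, sum_mul]
  conv_rhs => rw [sum_comm]
  exact sum_congr rfl fun a _ => sum_comm

section RandomWalk

variable {β : Type*} [Fintype β] (g : β → ℝ)

def stepSum {m : ℕ} (q : Fin m → β) : ℝ := ∑ i, g (q i)

theorem sum_stepSum_pow_succ (m k : ℕ) :
    ∑ q : Fin (m + 1) → β, stepSum g q ^ k =
      ∑ j ∈ range (k + 1), (∑ b, g b ^ j) * (∑ q : Fin m → β, stepSum g q ^ (k - j)) *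
        k.choose j := by
  rw [← sum_sum_add_pow, ← Fintype.sum_prod_type']
  refine Fintype.sum_equiv (Fin.consEquiv fun _ => β).symm _ _ fun q => ?_
  simp [stepSum, Fin.sum_univ_succ, Fin.tail]

variable {g} {σ κ : ℝ} (h₁ : ∑ b, g b = 0) (h₂ : ∑ b, g b ^ 2 = σ * Fintype.card β)
  (h₄ : ∑ b, g b ^ 4 = κ * Fintype.card β)

include h₁ in
theorem sum_stepSum (m : ℕ) : ∑ q : Fin m → β, stepSum g q = 0 := by
  induction m with
  | zero => simp [stepSum]
  | succ m ih => simpa [sum_range_succ, h₁, ih] using sum_stepSum_pow_succ g m 1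

include h₁ h₂ in
theorem sum_stepSum_sq (m : ℕ) :
    ∑ q : Fin m → β, stepSum g q ^ 2 = m * σ * Fintype.card β ^ m := by
  induction m with
  | zero => simp [stepSum]
  | succ m ih =>
    rw [sum_stepSum_pow_succ]
    simp [sum_range_succ, h₁, h₂, ih, sum_stepSum h₁]
    ring

include h₁ h₂ h₄ in
theorem sum_stepSum_pow_four (m : ℕ) :
    ∑ q : Fin m → β, stepSum g q ^ 4 =
      (m * κ + 3 * m * (m - 1) * σ ^ 2) * Fintype.card β ^ m := by
  induction m with
  | zero => simp [stepSum]
  | succ m ih =>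
    rw [sum_stepSum_pow_succ]
    simp [sum_range_succ, Nat.choose, h₁, h₂, h₄, ih, sum_stepSum h₁,
      sum_stepSum_sq h₁ h₂]
    ring

end RandomWalk

theorem sum_le_sum_filter_nonneg {α : Type*} (s : Finset α) (f : α → ℝ) :
    ∑ x ∈ s, f x ≤ ∑ x ∈ s with 0 ≤ f x, f x := by
  rw [← sum_filter_add_sum_filter_not s (0 ≤ f ·)]
  exact add_le_of_nonpos_right <| sum_nonpos fun x hx => le_of_lt <| not_le.mp (mem_filter.mp hx).2

theorem sq_sum_le_card_filter_nonneg_mul_sum_sq {α : Type*} (s : Finset α) (f : α → ℝ)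
    (h : 0 ≤ ∑ x ∈ s, f x) :
    (∑ x ∈ s, f x) ^ 2 ≤ #{x ∈ s | 0 ≤ f x} * ∑ x ∈ s, f x ^ 2 :=
  calc (∑ x ∈ s, f x) ^ 2 ≤ (∑ x ∈ s with 0 ≤ f x, f x) ^ 2 :=
        pow_le_pow_left₀ h (sum_le_sum_filter_nonneg s f) 2
    _ ≤ #{x ∈ s | 0 ≤ f x} * ∑ x ∈ s with 0 ≤ f x, f x ^ 2 := sq_sum_le_card_mul_sum_sq
    _ ≤ #{x ∈ s | 0 ≤ f x} * ∑ x ∈ s, f x ^ 2 := by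
        gcongr
        exact filter_subset _ s

theorem one_div_sqrt_le_abs_inv_mul_iff (a x : ℝ) :
    1 / √a ≤ |a⁻¹ * x| ↔ a ≤ x ^ 2 := by
  rcases le_or_gt a 0 with ha | ha
  · simp [Real.sqrt_eq_zero'.mpr ha, ha.trans (sq_nonneg x)]
    positivity
  rw [abs_mul, abs_of_pos (inv_pos.mpr ha), ← div_eq_inv_mul, ← Real.sqrt_div_self',
    div_le_div_iff_of_pos_right ha, Real.sqrt_le_left (abs_nonneg x), sq_abs]

def coinDiff (b : Bool × Bool) : ℝ :=
  (if b.1 then 1 else -1) - (if b.2 then 1 else -1)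

theorem sum_coinDiff : ∑ b, coinDiff b = 0 := by
  simp [Fintype.sum_prod_type, coinDiff]

theorem sum_coinDiff_sq : ∑ b, coinDiff b ^ 2 = 2 * Fintype.card (Bool × Bool) := by
  simp [Fintype.sum_prod_type, coinDiff]
  norm_num

theorem sum_coinDiff_pow_four : ∑ b, coinDiff b ^ 4 = 8 * Fintype.card (Bool × Bool) := by
  simp [Fintype.sum_prod_type, coinDiff]
  norm_num

theorem sum_sum_coinDiff_pow (n k : ℕ) :
    ∑ p : (Fin n → Bool) × (Fin n → Bool), (∑ i, coinDiff (p.1 i, p.2 i)) ^ k =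
      ∑ q : Fin n → Bool × Bool, stepSum coinDiff q ^ k :=
  (Fintype.sum_equiv (Equiv.arrowProdEquivProdArrow _ _ _) _ _ fun _ => rfl).symm

theorem sum_sum_coinDiff_sq (n : ℕ) :
    ∑ p : (Fin n → Bool) × (Fin n → Bool), (∑ i, coinDiff (p.1 i, p.2 i)) ^ 2 =
      2 * n * 4 ^ n := by
  rw [sum_sum_coinDiff_pow, sum_stepSum_sq sum_coinDiff sum_coinDiff_sq]
  simp [mul_comm]

theorem sum_sum_coinDiff_pow_four (n : ℕ) :
    ∑ p : (Fin n → Bool) × (Fin n → Bool), (∑ i, coinDiff (p.1 i, p.2 i)) ^ 4 =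
      (12 * n ^ 2 - 4 * n) * 4 ^ n := by
  rw [sum_sum_coinDiff_pow, sum_stepSum_pow_four sum_coinDiff sum_coinDiff_sq sum_coinDiff_pow_four]
  simp
  ring

theorem four_pow_le_nine_mul_card_filter (n : ℕ) (hn : 1 ≤ n) :
    (4 : ℝ) ^ n ≤
      9 * #{p : (Fin n → Bool) × (Fin n → Bool) |
        n ≤ (∑ i, coinDiff (p.1 i, p.2 i)) ^ 2} := by
  set S := fun p : (Fin n → Bool) × (Fin n → Bool) => ∑ i, coinDiff (p.1 i, p.2 i)
  set C : ℝ := ((#{p | n ≤ S p ^ 2} : ℕ) : ℝ)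
  have hsum : ∑ p, (S p ^ 2 - n) = n * 4 ^ n := by
    simp [sum_sub_distrib, S, sum_sum_coinDiff_sq, ← mul_pow]
    ring
  have hsum_sq : ∑ p, (S p ^ 2 - n) ^ 2 = (9 * n ^ 2 - 4 * n) * 4 ^ n := by
    have expand : ∀ p, (S p ^ 2 - n) ^ 2 = S p ^ 4 - 2 * n * S p ^ 2 + n ^ 2 := fun p => by ring
    simp [expand, sum_add_distrib, sum_sub_distrib, ← mul_sum, S, sum_sum_coinDiff_sq,
      sum_sum_coinDiff_pow_four, ← mul_pow]
    ring
  have key := sq_sum_le_card_filter_nonneg_mul_sum_sq univ (fun p => S p ^ 2 - n)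
    (hsum ▸ by positivity)
  simp only [sub_nonneg, hsum, hsum_sq] at key
  refine le_of_mul_le_mul_left ?_ (by positivity : (0 : ℝ) < n ^ 2 * 4 ^ n)
  calc (n : ℝ) ^ 2 * 4 ^ n * 4 ^ n = (n * 4 ^ n) ^ 2 := by ring
    _ ≤ C * ((9 * n ^ 2 - 4 * n) * 4 ^ n) := key
    _ ≤ C * (9 * n ^ 2 * 4 ^ n) := by gcongr; linarith
    _ = n ^ 2 * 4 ^ n * (9 * C) := by ring

theorem stmt_17 (n : ℕ) (hn : 1 ≤ n) :
    (1 : ℝ) / 10 ≤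
      ((Finset.univ.filter fun p : (Fin n → Bool) × (Fin n → Bool) =>
          1 / Real.sqrt n ≤
            |(n : ℝ)⁻¹ * ∑ i, ((if p.1 i then (1 : ℝ) else -1)
              - (if p.2 i then (1 : ℝ) else -1))|).card : ℝ) / 2 ^ (2 * n) := by
  rw [filter_congr fun p _ => one_div_sqrt_le_abs_inv_mul_iff n (∑ i, coinDiff (p.1 i, p.2 i)),
    show (2 : ℝ) ^ (2 * n) = 4 ^ n by rw [pow_mul]; norm_num,
    div_le_div_iff₀ (by norm_num) (by positivity)]
  linarith [four_pow_le_nine_mul_card_filter n hn]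
end
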